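/- Let K be a nonempty closed convex subset of a uniformly convex real Banach space E with a partial order ≤ induced by a closed convex cone P, and let T : K → K be a monotone α-nonexpansive mapping for some α < 1. Assume x₀ ∈ K satisfies Tx₀ ≤ x₀ and the orbit O(x₀) = {Tⁿx₀ : n = 0, 1, 2, ...} is bounded in norm. If the norm is monotonic (‖x‖ ≤ ‖y‖ whenever 0 ≤ x ≤ y), then the sequence Tⁿx₀ converges weakly to a fixed point z of T with z ≤ x₀. -/

import Mathlib

/-!
The iterates `xₙ = Tⁿx₀` decrease: `Tx₀ ≤ x₀` propagates along the orbit by monotonicity of `T`.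
So `yₙ = x₀ - xₙ` increases in the cone, and by monotonicity of the norm `‖yₙ‖` increases to
some `L`. For `n ≥ N` we have `2 y_N ≤ yₙ + y_N`, hence `2‖y_N‖ ≤ ‖yₙ + y_N‖`; once `‖y_N‖` is
close to `L`, uniform convexity forces `‖yₙ - y_N‖` to be small. Thus the orbit is Cauchy and
converges in norm to some `z ≤ xₙ`. Letting `n → ∞` in the α-nonexpansive inequality for the pair
`z ≤ xₙ` gives `‖Tz - z‖² ≤ α ‖Tz - z‖²`, so `Tz = z`; norm convergence implies weak convergence.
-/

open Filter Topology

/-- A closed convex cone in a real normed space: nonempty, closed, not `{0}`,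
pointed (`P ∩ (−P) = {0}`), and closed under nonnegative linear combinations. -/
def IsClosedConvexCone {E : Type*} [NormedAddCommGroup E] [NormedSpace ℝ E]
    (P : Set E) : Prop :=
  P.Nonempty ∧ IsClosed P ∧ P ≠ {0} ∧ P ∩ (-P) = {0} ∧
    ∀ x ∈ P, ∀ y ∈ P, ∀ a b : ℝ, 0 ≤ a → 0 ≤ b → a • x + b • y ∈ P

/-- Weak convergence of a sequence: `f (x n) → f l` for every continuous
linear functional `f`. -/
def WeakConv {E : Type*} [NormedAddCommGroup E] [NormedSpace ℝ E]
    (x : ℕ → E) (l : E) : Prop :=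
  ∀ f : E →L[ℝ] ℝ, Tendsto (fun n => f (x n)) atTop (𝓝 (f l))

/-- `T` is monotone (w.r.t. the order `x ≤ y ↔ y - x ∈ P`) and α-nonexpansive
on `K`. -/
def MonotoneAlphaNonexpansive {E : Type*} [NormedAddCommGroup E] [NormedSpace ℝ E]
    (P K : Set E) (T : E → E) (α : ℝ) : Prop :=
  (∀ x ∈ K, ∀ y ∈ K, y - x ∈ P → T y - T x ∈ P) ∧
    ∀ x ∈ K, ∀ y ∈ K, y - x ∈ P →
      ‖T x - T y‖ ^ 2 ≤ α * ‖T x - y‖ ^ 2 + α * ‖T y - x‖ ^ 2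
        + (1 - 2 * α) * ‖x - y‖ ^ 2

section

open Set

variable {E : Type*} [NormedAddCommGroup E] {P : Set E}

lemma iterate_sub_iterate_succ_mem {K : Set E} {T : E → E}
    (hmono : ∀ x ∈ K, ∀ y ∈ K, y - x ∈ P → T y - T x ∈ P) (hTK : MapsTo T K K)
    {x₀ : E} (hx₀ : x₀ ∈ K) (hdec : x₀ - T x₀ ∈ P) (n : ℕ) :
    T^[n] x₀ - T^[n + 1] x₀ ∈ P := by
  induction n with
  | zero => simpa using hdec
  | succ n ih =>
    have := hmono _ (hTK.iterate (n + 1) hx₀) _ (hTK.iterate n hx₀) ih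
    rwa [← Function.iterate_succ_apply' T n, ← Function.iterate_succ_apply' T (n + 1)] at this

variable [NormedSpace ℝ E]

namespace IsClosedConvexCone

lemma add_mem (hP : IsClosedConvexCone P) {p q : E} (hp : p ∈ P) (hq : q ∈ P) : p + q ∈ P := by
  simpa using hP.2.2.2.2 p hp q hq 1 1 zero_le_one zero_le_one

lemma zero_mem (hP : IsClosedConvexCone P) : (0 : E) ∈ P := by
  obtain ⟨p, hp⟩ := hP.1
  simpa using hP.2.2.2.2 p hp p hp 0 0 le_rfl le_rfl

lemma sub_mem_of_le_of_forall_succ (hP : IsClosedConvexCone P) {x : ℕ → E}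
    (hstep : ∀ n, x n - x (n + 1) ∈ P) {n m : ℕ} (hnm : n ≤ m) : x n - x m ∈ P := by
  induction m, hnm using Nat.le_induction with
  | base => simpa using hP.zero_mem
  | succ m _ ih => simpa using hP.add_mem ih (hstep m)

lemma sub_mem_of_tendsto (hP : IsClosedConvexCone P) {x : ℕ → E} {z : E}
    (hanti : ∀ n m, n ≤ m → x n - x m ∈ P) (hx : Tendsto x atTop (𝓝 z)) (n : ℕ) :
    x n - z ∈ P :=
  hP.2.1.mem_of_tendsto (tendsto_const_nhds.sub hx)
    (eventually_atTop.2 ⟨n, fun m hm => hanti n m hm⟩)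

variable [UniformConvexSpace E]

lemma cauchySeq_of_monotone (hP : IsClosedConvexCone P)
    (hnorm : ∀ x y : E, x ∈ P → y - x ∈ P → ‖x‖ ≤ ‖y‖) {y : ℕ → E} (hpos : ∀ n, y n ∈ P)
    (hmono : ∀ n m, n ≤ m → y m - y n ∈ P) (hbdd : BddAbove (range fun n => ‖y n‖)) :
    CauchySeq y := by
  set L := ⨆ n, ‖y n‖
  have hle_L : ∀ n, ‖y n‖ ≤ L := le_ciSup hbdd
  have hL : Tendsto (fun n => ‖y n‖) atTop (𝓝 L) :=
    tendsto_atTop_ciSup (fun n m h => hnorm _ _ (hpos n) (hmono n m h)) hbdd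
  rw [Metric.cauchySeq_iff']
  intro ε hε
  obtain ⟨δ, hδ, hconv⟩ := exists_forall_closed_ball_dist_add_le_two_mul_sub E hε L
  obtain ⟨N, hN⟩ := (hL.eventually (eventually_gt_nhds (by linarith : L - δ / 2 < L))).exists
  refine ⟨N, fun n hn => ?_⟩
  by_contra! hfar
  rw [dist_eq_norm] at hfar
  have upper : ‖y n + y N‖ ≤ 2 * L - δ := hconv (hle_L n) (hle_L N) hfar
  have lower : ‖y N + y N‖ ≤ ‖y n + y N‖ :=
    hnorm _ _ (hP.add_mem (hpos N) (hpos N)) (by simpa using hmono N n hn)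
  rw [← two_smul ℝ, norm_smul, Real.norm_two] at lower
  linarith

lemma cauchySeq_of_antitone (hP : IsClosedConvexCone P)
    (hnorm : ∀ x y : E, x ∈ P → y - x ∈ P → ‖x‖ ≤ ‖y‖) {x : ℕ → E}
    (hanti : ∀ n m, n ≤ m → x n - x m ∈ P) (hbdd : ∃ M, ∀ n, ‖x n‖ ≤ M) : CauchySeq x := by
  obtain ⟨M, hM⟩ := hbdd
  have hy : CauchySeq fun n => x 0 - x n := by
    refine hP.cauchySeq_of_monotone hnorm (fun n => hanti 0 n n.zero_le)
      (fun n m hnm => by simpa using hanti n m hnm) ⟨‖x 0‖ + M, ?_⟩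
    rintro _ ⟨n, rfl⟩
    exact (norm_sub_le _ _).trans (by linarith [hM n])
  simpa [Function.comp_def] using
    ((uniformContinuous_const (b := x 0)).sub uniformContinuous_id).comp_cauchySeq hy

end IsClosedConvexCone

lemma MonotoneAlphaNonexpansive.isFixedPt_of_tendsto {K : Set E} {T : E → E} {α : ℝ}
    (hT : MonotoneAlphaNonexpansive P K T α) (hα : α < 1) {u : ℕ → E} {z : E}
    (huK : ∀ n, u n ∈ K) (hu_succ : ∀ n, T (u n) = u (n + 1)) (hzK : z ∈ K)
    (hzu : ∀ n, u n - z ∈ P) (hu : Tendsto u atTop (𝓝 z)) : Function.IsFixedPt T z := by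
  have hu' : Tendsto (fun n => u (n + 1)) atTop (𝓝 z) := hu.comp (tendsto_add_atTop_nat 1)
  have hlim : ‖T z - z‖ ^ 2 ≤
      α * ‖T z - z‖ ^ 2 + α * ‖z - z‖ ^ 2 + (1 - 2 * α) * ‖z - z‖ ^ 2 :=
    le_of_tendsto_of_tendsto' ((tendsto_const_nhds.sub hu').norm.pow 2)
      (((((tendsto_const_nhds.sub hu).norm.pow 2).const_mul α).add
        (((hu'.sub tendsto_const_nhds).norm.pow 2).const_mul α)).add
        (((tendsto_const_nhds.sub hu).norm.pow 2).const_mul (1 - 2 * α)))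
      (fun n => by simpa only [hu_succ] using hT.2 z hzK (u n) (huK n) (hzu n))
  simp only [sub_self, norm_zero] at hlim
  have hsq : ‖T z - z‖ ^ 2 = 0 := le_antisymm (by nlinarith) (sq_nonneg _)
  exact sub_eq_zero.mp (norm_eq_zero.mp (pow_eq_zero_iff two_ne_zero |>.mp hsq))

lemma weakConv_of_tendsto {x : ℕ → E} {l : E} (hx : Tendsto x atTop (𝓝 l)) : WeakConv x l :=
  fun f => (f.continuous.tendsto l).comp hx

end

theorem picard_weak_convergence_decreasing_general
    {E : Type*} [NormedAddCommGroup E] [NormedSpace ℝ E]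
    [UniformConvexSpace E] [CompleteSpace E]
    (P : Set E) (hP : IsClosedConvexCone P)
    (K : Set E) (hKcl : IsClosed K)
    (T : E → E) (hTK : ∀ x ∈ K, T x ∈ K)
    (α : ℝ) (hα : α < 1)
    (hT : MonotoneAlphaNonexpansive P K T α)
    (x₀ : E) (hx₀ : x₀ ∈ K) (hdec : x₀ - T x₀ ∈ P)
    (hbdd : ∃ M : ℝ, ∀ n : ℕ, ‖T^[n] x₀‖ ≤ M)
    (hnorm : ∀ x y : E, x ∈ P → y - x ∈ P → ‖x‖ ≤ ‖y‖) :
    ∃ z ∈ K, T z = z ∧ x₀ - z ∈ P ∧ WeakConv (fun n => T^[n] x₀) z := by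
  have hmaps : Set.MapsTo T K K := fun x hx => hTK x hx
  have horbitK : ∀ n, T^[n] x₀ ∈ K := fun n => hmaps.iterate n hx₀
  have hanti : ∀ n m, n ≤ m → T^[n] x₀ - T^[m] x₀ ∈ P := fun _ _ =>
    hP.sub_mem_of_le_of_forall_succ (iterate_sub_iterate_succ_mem hT.1 hmaps hx₀ hdec)
  obtain ⟨z, hz⟩ := cauchySeq_tendsto_of_complete (hP.cauchySeq_of_antitone hnorm hanti hbdd)
  have hzK : z ∈ K := hKcl.mem_of_tendsto hz (Eventually.of_forall horbitK)
  have hzle := hP.sub_mem_of_tendsto hanti hz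
  have hTz : T z = z := hT.isFixedPt_of_tendsto hα horbitK
    (fun n => (Function.iterate_succ_apply' T n x₀).symm) hzK hzle hz
  exact ⟨z, hzK, hTz, hzle 0, weakConv_of_tendsto hz⟩

/-- If `T x₀ ≤ x₀`, the orbit of `x₀` is norm-bounded and the norm is
monotonic, then the Picard iterates converge weakly to a fixed point `z ≤ x₀`. -/
theorem picard_weak_convergence_decreasing
    {E : Type*} [NormedAddCommGroup E] [NormedSpace ℝ E]
    [UniformConvexSpace E] [CompleteSpace E]
    (P : Set E) (hP : IsClosedConvexCone P)
    (K : Set E) (hKne : K.Nonempty) (hKcl : IsClosed K) (hKco : Convex ℝ K)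
    (T : E → E) (hTK : ∀ x ∈ K, T x ∈ K)
    (α : ℝ) (hα : α < 1)
    (hT : MonotoneAlphaNonexpansive P K T α)
    (x₀ : E) (hx₀ : x₀ ∈ K) (hdec : x₀ - T x₀ ∈ P)
    (hbdd : ∃ M : ℝ, ∀ n : ℕ, ‖T^[n] x₀‖ ≤ M)
    (hnorm : ∀ x y : E, x ∈ P → y - x ∈ P → ‖x‖ ≤ ‖y‖) :
    ∃ z ∈ K, T z = z ∧ x₀ - z ∈ P ∧ WeakConv (fun n => T^[n] x₀) z :=
  picard_weak_convergence_decreasing_general P hP K hKcl T hTK α hα hT x₀ hx₀ hdec hbdd hnorm
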